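/- Let {S_i}_{i=1}^m be an iterated function system of contracting maps on ℝ^d with attractor F, let η be an ergodic σ-invariant Borel probability measure on Σ = {1,…,m}^ℕ, and let μ = η ∘ π^{−1}, where π(x) = lim_{n→∞} S_{x_1}∘⋯∘S_{x_n}(0) is the coding map. Then μ is either singular with respect to, or absolutely continuous with respect to, the restriction L^d_F of d-dimensional Lebesgue measure to F. -/

import Mathlib

open MeasureTheory Filter Set Metric Topology

noncomputable section

/-- The `i`-th largest singular value (0-indexed) of a real `d × d` matrix:
the positive square roots of the eigenvalues of `Aᵀ * A`, in decreasing order. -/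
def singVal (d : ℕ) (A : Matrix (Fin d) (Fin d) ℝ) (i : Fin d) : ℝ :=
  Real.sqrt
    (((Matrix.isHermitian_iff_isSymm.mpr (Matrix.isSymm_transpose_mul_self A)).eigenvalues ∘
      ⇑(Tuple.sort (Matrix.isHermitian_iff_isSymm.mpr (Matrix.isSymm_transpose_mul_self A)).eigenvalues)) i.rev)

/-- `ℕ`-indexed version of the singular values (junk value `0` out of range). -/
def svNat (d : ℕ) (A : Matrix (Fin d) (Fin d) ℝ) (i : ℕ) : ℝ :=
  if h : i < d then singVal d A ⟨i, h⟩ else 0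

/-- Falconer's singular value function `φ^s(A)`:  for `k - 1 < s ≤ k ≤ d` it equals
`α₁ ⋯ α_{k-1} · α_k ^ (s - k + 1)`, for `s ≥ d` it equals `(α₁ ⋯ α_d) ^ (s/d)`, and
`φ^0(A) = 1`. -/
def svf (d : ℕ) (A : Matrix (Fin d) (Fin d) ℝ) (s : ℝ) : ℝ :=
  if s = 0 then 1
  else if s ≤ d then
    (∏ i ∈ Finset.range (⌈s⌉₊ - 1), svNat d A i) *
      svNat d A (⌈s⌉₊ - 1) ^ (s - ((⌈s⌉₊ - 1 : ℕ) : ℝ))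
  else (∏ i ∈ Finset.range d, svNat d A i) ^ (s / d)

/-- `T_I = T_{i₁} ⬝ ⋯ ⬝ T_{i_k}` for a word `I = i₁ … i_k`. -/
def wordT {d m : ℕ} (T : Fin m → Matrix (Fin d) (Fin d) ℝ) (I : List (Fin m)) :
    Matrix (Fin d) (Fin d) ℝ := (I.map T).prod

/-- `p_I = p_{i₁} ⋯ p_{i_k}` for a word `I = i₁ … i_k`. -/
def wordP {m : ℕ} (p : Fin m → ℝ) (I : List (Fin m)) : ℝ := (I.map p).prod

/-- The word `x|n = x₁ … x_n` consisting of the first `n` letters of `x ∈ Σ`. -/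
def wordOf {m : ℕ} (x : ℕ → Fin m) (n : ℕ) : List (Fin m) := (List.range n).map x

/-- Operator norm of a matrix acting on Euclidean space. -/
def matOpNorm (d : ℕ) (A : Matrix (Fin d) (Fin d) ℝ) : ℝ :=
  ‖LinearMap.toContinuousLinearMap (Matrix.toEuclideanLin A)‖

/-- Convergence of the series `∑_{k ≥ 1} ∑_{I ∈ Σ_k} φ^s(T_I)^{1-q} p_I^q`. -/
def DSeriesConv (d m : ℕ) (T : Fin m → Matrix (Fin d) (Fin d) ℝ) (p : Fin m → ℝ)
    (q s : ℝ) : Prop :=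
  Summable fun I : {I : List (Fin m) // I ≠ []} =>
    svf d (wordT T I.1) s ^ (1 - q) * wordP p I.1 ^ q

/-- Falconer's function `D(q)`. -/
def Dfun (d m : ℕ) (T : Fin m → Matrix (Fin d) (Fin d) ℝ) (p : Fin m → ℝ) (q : ℝ) : ℝ :=
  if q < 1 then (q - 1) * sInf {s : ℝ | 0 ≤ s ∧ DSeriesConv d m T p q s}
  else if q = 1 then 0
  else (q - 1) * sSup {s : ℝ | 0 ≤ s ∧ DSeriesConv d m T p q s}

/-- The function `τ(q) = (q-1) · min (D(q)/(q-1), d)` (with `τ(1) = 0`). -/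
def taufun (d m : ℕ) (T : Fin m → Matrix (Fin d) (Fin d) ℝ) (p : Fin m → ℝ) (q : ℝ) : ℝ :=
  if q = 1 then 0 else (q - 1) * min (Dfun d m T p q / (q - 1)) d

/-- The affine map `S = T + a` on `ℝ^d`. -/
def affMap {d : ℕ} (A : Matrix (Fin d) (Fin d) ℝ) (a : EuclideanSpace ℝ (Fin d)) :
    EuclideanSpace ℝ (Fin d) → EuclideanSpace ℝ (Fin d) :=
  fun x => Matrix.toEuclideanLin A x + a

/-- The composition `S_{i₁} ∘ ⋯ ∘ S_{i_k}` for a word `I = i₁ … i_k`. -/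
def affWord {d m : ℕ} (T : Fin m → Matrix (Fin d) (Fin d) ℝ)
    (a : Fin m → EuclideanSpace ℝ (Fin d)) (I : List (Fin m)) :
    EuclideanSpace ℝ (Fin d) → EuclideanSpace ℝ (Fin d) :=
  I.foldr (fun i g => affMap (T i) (a i) ∘ g) id

/-- `μ` is the self-affine measure for the IFS `{T_i + a_i}` and weights `(p_i)`:
the (unique) Borel probability measure with `μ = ∑ p_i · μ ∘ S_i⁻¹`. -/
def IsSelfAffineMeasure {d m : ℕ} (T : Fin m → Matrix (Fin d) (Fin d) ℝ)
    (p : Fin m → ℝ) (a : Fin m → EuclideanSpace ℝ (Fin d))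
    (μ : Measure (EuclideanSpace ℝ (Fin d))) : Prop :=
  IsProbabilityMeasure μ ∧
    μ = ∑ i, ENNReal.ofReal (p i) • μ.map (affMap (T i) (a i))

/-- The coding map `π^a(x) = lim_n S_{x₁} ∘ ⋯ ∘ S_{x_n}(0)`. -/
def codingMap {d m : ℕ} (T : Fin m → Matrix (Fin d) (Fin d) ℝ)
    (a : Fin m → EuclideanSpace ℝ (Fin d)) (x : ℕ → Fin m) : EuclideanSpace ℝ (Fin d) :=
  limUnder atTop fun n => affWord T a (wordOf x n) 0

/-- The left shift on `Σ = {1, …, m}^ℕ`. -/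
def shiftMap {m : ℕ} (x : ℕ → Fin m) : ℕ → Fin m := fun n => x (n + 1)

/-- The topological support of a measure on `ℝ^d`. -/
def msupp {d : ℕ} (ξ : Measure (EuclideanSpace ℝ (Fin d))) : Set (EuclideanSpace ℝ (Fin d)) :=
  {x | ∀ r > (0 : ℝ), 0 < ξ (ball x r)}

/-- `sup ∑_j ξ(B_r(x_j))^q` over families of disjoint balls of radius `r` centered
in the support of `ξ`. -/
def packSum {d : ℕ} (ξ : Measure (EuclideanSpace ℝ (Fin d))) (q r : ℝ) : ℝ :=
  sSup {y : ℝ | ∃ t : Finset (EuclideanSpace ℝ (Fin d)),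
    (∀ x ∈ t, x ∈ msupp ξ) ∧
    ((t : Set (EuclideanSpace ℝ (Fin d))).Pairwise fun x x' =>
      Disjoint (closedBall x r) (closedBall x' r)) ∧
    y = ∑ x ∈ t, (ξ (closedBall x r)).toReal ^ q}

/-- The `L^q`-spectrum `τ(ξ, q)`. -/
def LqSpec {d : ℕ} (ξ : Measure (EuclideanSpace ℝ (Fin d))) (q : ℝ) : ℝ :=
  liminf (fun r => Real.log (packSum ξ q r) / Real.log r) (𝓝[>] (0 : ℝ))

/-- The lower local dimension `d̲(ξ, z)`. -/
def lowerLocDim {d : ℕ} (ξ : Measure (EuclideanSpace ℝ (Fin d)))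
    (z : EuclideanSpace ℝ (Fin d)) : ℝ :=
  liminf (fun r => Real.log (ξ (closedBall z r)).toReal / Real.log r) (𝓝[>] (0 : ℝ))

/-- The level set `E(ξ, α)` of points where the local dimension exists and equals `α`. -/
def limLevelSet {d : ℕ} (ξ : Measure (EuclideanSpace ℝ (Fin d))) (α : ℝ) :
    Set (EuclideanSpace ℝ (Fin d)) :=
  {z | Tendsto (fun r => Real.log (ξ (closedBall z r)).toReal / Real.log r)
    (𝓝[>] (0 : ℝ)) (𝓝 α)}

/-- The level set `E̲(ξ, α)` of points where the lower local dimension equals `α`. -/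
def liminfLevelSet {d : ℕ} (ξ : Measure (EuclideanSpace ℝ (Fin d))) (α : ℝ) :
    Set (EuclideanSpace ℝ (Fin d)) :=
  {z | lowerLocDim ξ z = α}

/-- The composition `S_{i₁} ∘ ⋯ ∘ S_{i_k}` for a general IFS `S` on `ℝ^d`. -/
def compWord {d m : ℕ} (S : Fin m → EuclideanSpace ℝ (Fin d) → EuclideanSpace ℝ (Fin d))
    (I : List (Fin m)) : EuclideanSpace ℝ (Fin d) → EuclideanSpace ℝ (Fin d) :=
  I.foldr (fun i g => S i ∘ g) id

/-- The coding map of a general IFS: `π(x) = lim_n S_{x₁} ∘ ⋯ ∘ S_{x_n}(0)`. -/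
def codingMapGen {d m : ℕ} (S : Fin m → EuclideanSpace ℝ (Fin d) → EuclideanSpace ℝ (Fin d))
    (x : ℕ → Fin m) : EuclideanSpace ℝ (Fin d) :=
  limUnder atTop fun n => compWord S (wordOf x n) 0

/-- The rectangle in `ℝ^d` with edges parallel to the axes, center `c` and semi-axes `a`. -/
def axisRect {d : ℕ} (c a : Fin d → ℝ) : Set (Fin d → ℝ) := {y | ∀ i, |y i - c i| ≤ a i}

/-- The cube in `ℝ^d` with center `c` and semi-side `r`. -/
def cube {d : ℕ} (c : Fin d → ℝ) (r : ℝ) : Set (Fin d → ℝ) := {y | ∀ i, |y i - c i| ≤ r}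

end

section helper
open MeasureTheory Filter Set Metric Topology
open scoped ENNReal NNReal

private lemma lipschitz_image_null {d : ℕ} {f : EuclideanSpace ℝ (Fin d) → EuclideanSpace ℝ (Fin d)}
    {K : NNReal} (hf : LipschitzWith K f) {A : Set (EuclideanSpace ℝ (Fin d))}
    (hA : volume A = 0) : volume (f '' A) = 0 := by
  classical
  set e := (MeasurableEquiv.toLp 2 (Fin d → ℝ)).symm with he_def
  have hmp : MeasurePreserving (⇑e.symm) :=
    (EuclideanSpace.volume_preserving_symm_measurableEquiv_toLp (Fin d)).symm
  have key : ∀ s : Set (EuclideanSpace ℝ (Fin d)), volume s = volume (⇑e.symm ⁻¹' s) :=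
    fun s => (hmp.measure_preimage_equiv s).symm
  have hle : LipschitzWith 1 (⇑e) := PiLp.lipschitzWith_ofLp 2 _
  obtain ⟨c, hc⟩ : ∃ c, AntilipschitzWith c (⇑e) := ⟨_, PiLp.antilipschitzWith_ofLp 2 _⟩
  have hsym : LipschitzWith c (⇑e.symm) := hc.to_rightInverse (fun x => e.apply_symm_apply x)
  have hg : LipschitzWith (1 * (K * c)) (⇑e ∘ f ∘ ⇑e.symm) := hle.comp (hf.comp hsym)
  have hH : (μH[(d : ℝ)] : Measure (Fin d → ℝ)) = volume := by
    simpa using hausdorffMeasure_pi_real (ι := Fin d)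
  have himg : ⇑e.symm ⁻¹' (f '' A) = (⇑e ∘ f ∘ ⇑e.symm) '' (⇑e.symm ⁻¹' A) := by
    ext y
    simp only [Set.mem_preimage, Set.mem_image, Function.comp_apply]
    constructor
    · rintro ⟨a, ha, hfa⟩
      exact ⟨e a, by simpa using ha, by simp [hfa]⟩
    · rintro ⟨w, hw, hww⟩
      exact ⟨e.symm w, hw, by rw [← hww]; simp⟩
  refine le_antisymm ?_ zero_le
  calc volume (f '' A) = volume (⇑e.symm ⁻¹' (f '' A)) := key _
    _ = volume ((⇑e ∘ f ∘ ⇑e.symm) '' (⇑e.symm ⁻¹' A)) := by rw [himg]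
    _ ≤ ((1 * (K * c) : NNReal) : ℝ≥0∞) ^ (d : ℝ) * μH[(d : ℝ)] (⇑e.symm ⁻¹' A) := by
        rw [← hH]; exact hg.hausdorffMeasure_image_le (by positivity) _
    _ = 0 := by rw [hH, ← key A, hA, mul_zero]

end helper

theorem statement5 {d m : ℕ} (hd : 1 ≤ d) (hm : 2 ≤ m)
    (S : Fin m → EuclideanSpace ℝ (Fin d) → EuclideanSpace ℝ (Fin d))
    (hS : ∀ i, ∃ r : NNReal, r < 1 ∧ LipschitzWith r (S i))
    (F : Set (EuclideanSpace ℝ (Fin d))) (hFc : IsCompact F) (hFne : F.Nonempty)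
    (hFattr : F = ⋃ i, S i '' F)
    (η : Measure (ℕ → Fin m)) (hηp : IsProbabilityMeasure η)
    (hη : Ergodic shiftMap η) :
    η.map (codingMapGen S) ⟂ₘ volume.restrict F ∨
      η.map (codingMapGen S) ≪ volume.restrict F := by
  by_cases hmeas : AEMeasurable (codingMapGen S) η
  case neg =>
    rw [Measure.map_of_not_aemeasurable hmeas]
    exact Or.inl Measure.MutuallySingular.zero_left
  case pos =>
  classical
  -- global contraction data
  choose ρ hρlt hρlip using hS
  set r : NNReal := Finset.univ.sup ρ with hr_def
  have hm0 : 0 < m := lt_of_lt_of_le (by norm_num) hm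
  have hne : Nonempty (Fin m) := ⟨⟨0, hm0⟩⟩
  have hr1 : r < 1 := (Finset.sup_lt_iff (by norm_num)).mpr fun i _ => hρlt i
  have hr1' : (r : ℝ) < 1 := by exact_mod_cast hr1
  have hlip : ∀ i, LipschitzWith r (S i) :=
    fun i => (hρlip i).weaken (Finset.le_sup (Finset.mem_univ i))
  have hword : ∀ I : List (Fin m), LipschitzWith (r ^ I.length) (compWord S I) := by
    intro I
    induction I with
    | nil => simpa [compWord] using (LipschitzWith.id (α := EuclideanSpace ℝ (Fin d)))
    | cons i I ih =>
        have h := (hlip i).comp ih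
        have h2 : compWord S (i :: I) = S i ∘ compWord S I := rfl
        rw [h2, List.length_cons, pow_succ, mul_comm]
        exact h
  have hword_succ : ∀ (x : ℕ → Fin m) n, wordOf x (n + 1) = wordOf x n ++ [x n] := by
    intro x n; simp [wordOf, List.range_succ]
  have hword_shift : ∀ (x : ℕ → Fin m) n, wordOf x (n + 1) = x 0 :: wordOf (shiftMap x) n := by
    intro x n
    simp [wordOf, shiftMap, List.range_succ_eq_map, List.map_map, Function.comp_def]
  have hcomp_app : ∀ (I J : List (Fin m)) (y : EuclideanSpace ℝ (Fin d)),
      compWord S (I ++ J) y = compWord S I (compWord S J y) := by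
    intro I J y
    induction I with
    | nil => rfl
    | cons i I ih => exact congrArg (S i) ih
  have hlen : ∀ (x : ℕ → Fin m) n, (wordOf x n).length = n := by
    intro x n; simp [wordOf]
  set C : NNReal := Finset.univ.sup fun i => nndist (0 : EuclideanSpace ℝ (Fin d)) (S i 0)
    with hC_def
  have hC : ∀ i, dist (0 : EuclideanSpace ℝ (Fin d)) (S i 0) ≤ C := by
    intro i
    rw [dist_nndist]
    exact_mod_cast Finset.le_sup (f := fun i => nndist (0 : EuclideanSpace ℝ (Fin d)) (S i 0))
      (Finset.mem_univ i)
  -- convergence of the coding sequence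
  have hconv : ∀ x : ℕ → Fin m,
      Tendsto (fun n => compWord S (wordOf x n) 0) atTop (𝓝 (codingMapGen S x)) := by
    intro x
    have hc : CauchySeq (fun n => compWord S (wordOf x n) 0) := by
      apply cauchySeq_of_le_geometric (r : ℝ) (C : ℝ) hr1'
      intro n
      have h1 : compWord S (wordOf x (n + 1)) 0 = compWord S (wordOf x n) (S (x n) 0) := by
        rw [hword_succ]; exact hcomp_app _ _ _
      rw [h1]
      calc dist (compWord S (wordOf x n) 0) (compWord S (wordOf x n) (S (x n) 0))
          ≤ (r ^ (wordOf x n).length : NNReal) * dist (0 : EuclideanSpace ℝ (Fin d)) (S (x n) 0) :=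
            (hword _).dist_le_mul _ _
        _ ≤ (r : ℝ) ^ n * (C : ℝ) := by
            rw [hlen]
            push_cast
            exact mul_le_mul_of_nonneg_left (hC (x n)) (by positivity)
        _ = (C : ℝ) * (r : ℝ) ^ n := mul_comm _ _
    obtain ⟨a, ha⟩ := cauchySeq_tendsto_of_complete hc
    have : codingMapGen S x = a := ha.limUnder_eq
    rw [this]; exact ha
  -- the key self-similarity relation
  have hkey : ∀ x : ℕ → Fin m,
      codingMapGen S x = S (x 0) (codingMapGen S (shiftMap x)) := by
    intro x
    have hA : Tendsto (fun n => compWord S (wordOf x (n + 1)) 0) atTop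
        (𝓝 (codingMapGen S x)) := (hconv x).comp (tendsto_add_atTop_nat 1)
    have hB : Tendsto (fun n => compWord S (wordOf x (n + 1)) 0) atTop
        (𝓝 (S (x 0) (codingMapGen S (shiftMap x)))) := by
      have heq : (fun n => compWord S (wordOf x (n + 1)) 0)
          = fun n => S (x 0) (compWord S (wordOf (shiftMap x) n) 0) := by
        funext n; rw [hword_shift]; rfl
      rw [heq]
      exact ((hlip (x 0)).continuous.tendsto _).comp (hconv (shiftMap x))
    exact tendsto_nhds_unique hA hB
  -- the coding map lands in F
  have hmemF : ∀ x : ℕ → Fin m, codingMapGen S x ∈ F := by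
    obtain ⟨y₀, hy₀⟩ := hFne
    have hSF : ∀ i, S i '' F ⊆ F := fun i =>
      le_of_le_of_eq (subset_iUnion (fun j => S j '' F) i) hFattr.symm
    have hcmem : ∀ I : List (Fin m), compWord S I y₀ ∈ F := by
      intro I
      induction I with
      | nil => exact hy₀
      | cons i I ih => exact hSF i ⟨_, ih, rfl⟩
    intro x
    have htd : Tendsto (fun n => compWord S (wordOf x n) y₀) atTop (𝓝 (codingMapGen S x)) := by
      rw [tendsto_iff_dist_tendsto_zero]
      apply squeeze_zero (g := fun n => (r : ℝ) ^ n * dist y₀ (0 : EuclideanSpace ℝ (Fin d))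
        + dist (compWord S (wordOf x n) 0) (codingMapGen S x)) (fun n => dist_nonneg)
      · intro n
        have hb : dist (compWord S (wordOf x n) y₀) (compWord S (wordOf x n) 0)
            ≤ (r : ℝ) ^ n * dist y₀ (0 : EuclideanSpace ℝ (Fin d)) := by
          have := (hword (wordOf x n)).dist_le_mul y₀ 0
          rw [hlen] at this
          push_cast at this
          exact this
        calc dist (compWord S (wordOf x n) y₀) (codingMapGen S x)
            ≤ dist (compWord S (wordOf x n) y₀) (compWord S (wordOf x n) 0)
              + dist (compWord S (wordOf x n) 0) (codingMapGen S x) := dist_triangle _ _ _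
          _ ≤ (r : ℝ) ^ n * dist y₀ (0 : EuclideanSpace ℝ (Fin d))
              + dist (compWord S (wordOf x n) 0) (codingMapGen S x) := by
              exact add_le_add hb le_rfl
      · have h1 : Tendsto (fun n => (r : ℝ) ^ n * dist y₀ (0 : EuclideanSpace ℝ (Fin d)))
            atTop (𝓝 0) := by
          simpa using (tendsto_pow_atTop_nhds_zero_of_lt_one (by positivity) hr1').mul_const
            (dist y₀ (0 : EuclideanSpace ℝ (Fin d)))
        have h2 := tendsto_iff_dist_tendsto_zero.mp (hconv x)
        simpa using h1.add h2
    exact hFc.isClosed.mem_of_tendsto htd (Eventually.of_forall fun n => hcmem (wordOf x n))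
  -- set up the measures
  set μ := η.map (codingMapGen S) with hμdef
  have hprob : IsProbabilityMeasure μ := Measure.isProbabilityMeasure_map hmeas
  have hFmeas : MeasurableSet F := hFc.isClosed.measurableSet
  have hμFc : μ Fᶜ = 0 := by
    rw [hμdef, Measure.map_apply_of_aemeasurable hmeas hFmeas.compl]
    have hpre : codingMapGen S ⁻¹' Fᶜ = ∅ := by
      ext x; simp [hmemF x]
    rw [hpre, measure_empty]
  -- the supremum of masses of Lebesgue-null sets
  set Tset : Set ENNReal := (fun N => μ N) ''
    {N : Set (EuclideanSpace ℝ (Fin d)) | MeasurableSet N ∧ volume N = 0} with hTdef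
  have hTne : Tset.Nonempty := ⟨μ ∅, ∅, ⟨MeasurableSet.empty, by simp⟩, rfl⟩
  set t := sSup Tset with htdef
  obtain ⟨u, -, hut, humem⟩ := exists_seq_tendsto_sSup hTne (OrderTop.bddAbove Tset)
  simp only [hTdef, Set.mem_image, Set.mem_setOf_eq] at humem
  choose Nk hNk hNku using humem
  set N := ⋃ k, Nk k with hNdef
  have hNmeas : MeasurableSet N := MeasurableSet.iUnion fun k => (hNk k).1
  have hNnull : volume N = 0 := measure_iUnion_null fun k => (hNk k).2
  have hμN : μ N = t := by
    refine le_antisymm (le_sSup ⟨N, ⟨hNmeas, hNnull⟩, rfl⟩) ?_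
    refine le_of_tendsto hut (Eventually.of_forall fun k => ?_)
    rw [← hNku k]
    exact measure_mono (subset_iUnion _ k)
  set M := toMeasurable volume (N ∪ ⋃ i, S i '' N) with hMdef
  have hMmeas : MeasurableSet M := measurableSet_toMeasurable _ _
  have hMnull : volume M = 0 := by
    rw [hMdef, measure_toMeasurable]
    exact measure_union_null hNnull
      (measure_iUnion_null fun i => lipschitz_image_null (hlip i) hNnull)
  have hNM : N ⊆ M := Set.subset_union_left.trans (subset_toMeasurable _ _)
  have hSNM : ∀ i, S i '' N ⊆ M := fun i =>
    ((subset_iUnion (fun j => S j '' N) i).trans Set.subset_union_right).trans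
      (subset_toMeasurable _ _)
  have hμM : μ M ≤ t := le_sSup ⟨M, ⟨hMmeas, hMnull⟩, rfl⟩
  -- measurable representative of the coding map
  set π' := hmeas.mk (codingMapGen S) with hπ'def
  have hπ'meas : Measurable π' := hmeas.measurable_mk
  have hae : codingMapGen S =ᵐ[η] π' := hmeas.ae_eq_mk
  have hμmap : μ = η.map π' := Measure.map_congr hae
  have hσmeas : Measurable (shiftMap (m := m)) := hη.toMeasurePreserving.measurable
  set Λ := π' ⁻¹' N with hΛdef
  have hΛmeas : MeasurableSet Λ := hπ'meas hNmeas
  have hηΛ : η Λ = t := by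
    rw [← hμN, hμmap, Measure.map_apply hπ'meas hNmeas]
  have hηpre : η (shiftMap ⁻¹' Λ) = t := by
    rw [hη.toMeasurePreserving.measure_preimage hΛmeas.nullMeasurableSet, hηΛ]
  have hηM : η (π' ⁻¹' M) ≤ t := by
    rw [← Measure.map_apply hπ'meas hMmeas, ← hμmap]
    exact hμM
  -- almost-everywhere inclusion  σ⁻¹Λ ⊆ π'⁻¹M
  have hae2 : ∀ᵐ x ∂η, codingMapGen S (shiftMap x) = π' (shiftMap x) := by
    have hB : η {y | ¬ codingMapGen S y = π' y} = 0 := ae_iff.mp hae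
    have hB2 := hη.toMeasurePreserving.quasiMeasurePreserving.preimage_null hB
    exact ae_iff.mpr hB2
  have hincl : ∀ᵐ x ∂η, x ∈ shiftMap ⁻¹' Λ → x ∈ π' ⁻¹' M := by
    filter_upwards [hae, hae2] with x h1 h2 hx
    have hx' : π' (shiftMap x) ∈ N := hx
    have hxM : codingMapGen S x ∈ M := by
      rw [hkey x, h2]
      exact hSNM (x 0) ⟨_, hx', rfl⟩
    have : π' x ∈ M := by rwa [h1] at hxM
    exact this
  have hdiffnull : η ((shiftMap ⁻¹' Λ) \ (π' ⁻¹' M)) = 0 := by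
    rw [ae_iff] at hincl
    refine measure_mono_null ?_ hincl
    intro x hx
    simp only [Set.mem_diff, Set.mem_preimage] at hx
    simp only [Set.mem_setOf_eq, Classical.not_imp]
    exact ⟨hx.1, hx.2⟩
  have htne : t ≠ ⊤ := by
    rw [← hηΛ]; exact measure_ne_top η Λ
  have hUnion_le : η (shiftMap ⁻¹' Λ ∪ Λ) ≤ t := by
    have hsub1 : shiftMap ⁻¹' Λ ∪ Λ ⊆ (π' ⁻¹' M) ∪ ((shiftMap ⁻¹' Λ) \ (π' ⁻¹' M)) := by
      intro x hx
      by_cases hxM : x ∈ π' ⁻¹' M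
      · exact Or.inl hxM
      · rcases hx with hx | hx
        · exact Or.inr ⟨hx, hxM⟩
        · exact absurd (Set.mem_preimage.mpr (hNM hx)) hxM
    calc η (shiftMap ⁻¹' Λ ∪ Λ)
        ≤ η (π' ⁻¹' M) + η ((shiftMap ⁻¹' Λ) \ (π' ⁻¹' M)) :=
          le_trans (measure_mono hsub1) (measure_union_le _ _)
      _ ≤ t + 0 := add_le_add hηM (le_of_eq hdiffnull)
      _ = t := add_zero t
  have key2 : ∀ A B : Set (ℕ → Fin m), MeasurableSet A → η A = t →
      η (A ∪ B) ≤ t → η (B \ A) = 0 := by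
    intro A B hA hAt hU
    have h1 : η (A ∪ (B \ A)) = η A + η (B \ A) :=
      measure_union' disjoint_sdiff_self_right hA
    rw [Set.union_diff_self, hAt] at h1
    have h3 : t + η (B \ A) ≤ t + 0 := by
      rw [add_zero]; rw [← h1]; exact hU
    have h4 : η (B \ A) ≤ 0 := (ENNReal.add_le_add_iff_left htne).mp h3
    exact le_antisymm h4 zero_le
  have hinv : shiftMap ⁻¹' Λ =ᵐ[η] Λ := by
    exact MeasureTheory.ae_eq_set.mpr
      ⟨key2 Λ (shiftMap ⁻¹' Λ) hΛmeas hηΛ (by rwa [Set.union_comm]),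
       key2 (shiftMap ⁻¹' Λ) Λ (hσmeas hΛmeas) hηpre hUnion_le⟩
  rcases hη.quasiErgodic.ae_empty_or_univ₀ hΛmeas.nullMeasurableSet hinv with hcase | hcase
  · -- t = 0 :  absolutely continuous
    right
    have ht0 : t = 0 := by
      rw [← hηΛ, measure_congr hcase, measure_empty]
    refine Measure.AbsolutelyContinuous.mk ?_
    intro s hs hνs
    rw [Measure.restrict_apply hs] at hνs
    have h1 : μ (s ∩ F) = 0 := by
      have hle : μ (s ∩ F) ≤ t := le_sSup ⟨s ∩ F, ⟨hs.inter hFmeas, hνs⟩, rfl⟩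
      rw [ht0] at hle
      exact le_antisymm hle zero_le
    have h2 : μ (s \ F) = 0 :=
      measure_mono_null (fun x hx => hx.2) hμFc
    have hle : μ s ≤ μ (s ∩ F) + μ (s \ F) := by
      refine le_trans (measure_mono ?_) (measure_union_le _ _)
      intro x hx
      by_cases h : x ∈ F
      · exact Or.inl ⟨hx, h⟩
      · exact Or.inr ⟨hx, h⟩
    rw [h1, h2, add_zero] at hle
    exact le_antisymm hle zero_le
  · -- t = 1 :  singular
    left
    have ht1 : t = 1 := by
      rw [← hηΛ, measure_congr hcase, measure_univ]
    have hμN1 : μ N = 1 := hμN.trans ht1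
    have hμNc : μ Nᶜ = 0 := by
      rw [measure_compl hNmeas (measure_ne_top μ N), hμN1, measure_univ, tsub_self]
    refine ⟨Nᶜ, hNmeas.compl, hμNc, ?_⟩
    rw [compl_compl, Measure.restrict_apply hNmeas]
    exact measure_mono_null Set.inter_subset_left hNnull
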